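/- Let n ≥ 1, let w_1, …, w_n ≥ 0, let θ_1, …, θ_n, θH be real rates with associated rate function f. Let T > 0, θ^L > 0, C^L ≥ 0 and u^H ≥ 0 be reals, set D = T − C^L/θ^L, suppose D > 0, and let k ∈ {1, …, n+1} be an earliest completion window for D. Assume (i) Σ_{j=1}^{k−1} θ_j·w_j ≥ u^H·W_{k−1}; (ii) θ_j ≤ θ_{j+1} for all 1 ≤ j ≤ k−1 with j+1 ≤ n (and θ_n ≤ θH if k = n+1); (iii) θ_j ≥ u^H for all k ≤ j ≤ n; and (iv) θH ≥ u^H. Then for every t₀ with 0 ≤ t₀ < W_{k−1}, ∫_{t₀}^{t₀+T} f(s) ds ≥ u^H·T. -/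

import Mathlib

/-- Total duration of the first `p` windows: `W_p = w_1 + ⋯ + w_p` (with `W_0 = 0`). -/
noncomputable def Wsum (w : ℕ → ℝ) (p : ℕ) : ℝ := ∑ j ∈ Finset.Icc 1 p, w j

/-- The multi-rate fluid rate function: `f s = θ j` for `W_{j-1} ≤ s < W_j`
(`1 ≤ j ≤ n`) and `f s = θH` for `s ≥ W_n`. -/
noncomputable def rateFn (n : ℕ) (w θ : ℕ → ℝ) (θH : ℝ) (s : ℝ) : ℝ :=
  if s < Wsum w n then θ (sInf {j : ℕ | 1 ≤ j ∧ s < Wsum w j}) else θH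

/-- `k ∈ {1, …, n+1}` is an earliest completion window for `D` if `W_{k-1} < D`
and, in case `k ≤ n`, also `W_k ≥ D`. -/
def ECW (n : ℕ) (w : ℕ → ℝ) (D : ℝ) (k : ℕ) : Prop :=
  1 ≤ k ∧ k ≤ n + 1 ∧ Wsum w (k - 1) < D ∧ (k ≤ n → D ≤ Wsum w k)


/-!
Write `b = W_{k-1}`. Condition (ii) makes the rate function nondecreasing on `[0, b)`, conditions
(iii) and (iv) make it at least `u^H` from `b` on, and (i) says that its average over `[0, b]` is at
least `u^H`. Since `t₀ < b < D ≤ T`, the window `[t₀, t₀ + T]` reaches past `b`. If `f t₀ ≥ u^H`,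
monotonicity gives `f ≥ u^H` on the whole window. Otherwise `f ≤ u^H` on `[0, t₀]`, so the part of
`[0, b]` cut off by the window carries at most its share `u^H t₀` of the allocation.
-/

open Set MeasureTheory

lemma mul_sub_le_integral_of_le {g : ℝ → ℝ} {x y u : ℝ} (hxy : x ≤ y)
    (hg : IntervalIntegrable g volume x y) (hle : ∀ s ∈ Icc x y, u ≤ g s) :
    u * (y - x) ≤ ∫ s in x..y, g s := by
  simpa [mul_comm] using intervalIntegral.integral_mono_on hxy intervalIntegrable_const hg hle

lemma integral_le_mul_sub {g : ℝ → ℝ} {x y u : ℝ} (hxy : x ≤ y)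
    (hg : IntervalIntegrable g volume x y) (hle : ∀ s ∈ Icc x y, g s ≤ u) :
    ∫ s in x..y, g s ≤ u * (y - x) := by
  simpa [mul_comm] using intervalIntegral.integral_mono_on hxy hg intervalIntegrable_const hle

lemma mul_sub_le_integral_of_monotoneOn {g : ℝ → ℝ} {a t b e u : ℝ}
    (hat : a ≤ t) (htb : t < b) (hbe : b ≤ e) (hg : IntervalIntegrable g volume a e)
    (hmono : MonotoneOn g (Ico a b)) (htail : ∀ s ∈ Icc b e, u ≤ g s)
    (hhead : u * (b - a) ≤ ∫ s in a..b, g s) :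
    u * (e - t) ≤ ∫ s in t..e, g s := by
  have hab : a ≤ b := hat.trans htb.le
  have hte : t ≤ e := htb.le.trans hbe
  have hint {x y : ℝ} (hx : x ∈ Icc a e) (hy : y ∈ Icc a e) : IntervalIntegrable g volume x y :=
    hg.mono_set <| uIcc_subset_uIcc (Icc_subset_uIcc hx) (Icc_subset_uIcc hy)
  have ht : t ∈ Icc a e := ⟨hat, hte⟩
  have hb : b ∈ Icc a e := ⟨hab, hbe⟩
  have ha : a ∈ Icc a e := left_mem_Icc.2 (hab.trans hbe)
  have he : e ∈ Icc a e := right_mem_Icc.2 (hab.trans hbe)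
  rcases le_or_gt u (g t) with hut | hgt
  · refine mul_sub_le_integral_of_le hte (hint ht he) fun s hs => ?_
    rcases lt_or_ge s b with hsb | hbs
    · exact hut.trans (hmono ⟨hat, htb⟩ ⟨hat.trans hs.1, hsb⟩ hs.1)
    · exact htail s ⟨hbs, hs.2⟩
  · have hfirst := integral_le_mul_sub hat (hint ha ht) fun s hs =>
      (hmono ⟨hs.1, hs.2.trans_lt htb⟩ ⟨hat, htb⟩ hs.2).trans hgt.le
    have hlast := mul_sub_le_integral_of_le hbe (hint hb he) htail
    have hsplit : (∫ s in a..t, g s) + ∫ s in t..e, g s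
        = (∫ s in a..b, g s) + ∫ s in b..e, g s := by
      rw [intervalIntegral.integral_add_adjacent_intervals (hint ha ht) (hint ht he),
        intervalIntegral.integral_add_adjacent_intervals (hint ha hb) (hint hb he)]
    linarith

section RateFn

variable {n : ℕ} {w : ℕ → ℝ} {θ : ℕ → ℝ} {θH : ℝ}

lemma Wsum_zero (w : ℕ → ℝ) : Wsum w 0 = 0 := by simp [Wsum]

lemma Wsum_succ (w : ℕ → ℝ) (p : ℕ) : Wsum w (p + 1) = Wsum w p + w (p + 1) :=
  Finset.sum_Icc_succ_top (by omega) w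

lemma rateFn_of_Wsum_le {s : ℝ} (hs : Wsum w n ≤ s) : rateFn n w θ θH s = θH :=
  if_neg hs.not_gt

lemma exists_mem_Ico_Wsum {s : ℝ} (hs : s ∈ Ico 0 (Wsum w n)) :
    ∃ j, 1 ≤ j ∧ j ≤ n ∧ s ∈ Ico (Wsum w (j - 1)) (Wsum w j) := by
  have hn : 1 ≤ n := by
    by_contra! hn
    rw [Nat.lt_one_iff.1 hn, Wsum_zero] at hs
    exact hs.1.not_gt hs.2
  have hmem : n ∈ {i : ℕ | 1 ≤ i ∧ s < Wsum w i} := ⟨hn, hs.2⟩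
  obtain ⟨hj, hlt⟩ := Nat.sInf_mem ⟨n, hmem⟩
  set j := sInf {i : ℕ | 1 ≤ i ∧ s < Wsum w i}
  have hjn : j ≤ n := Nat.sInf_le hmem
  have hle : Wsum w (j - 1) ≤ s := by
    by_contra! hgt
    obtain hj1 | hj1 := hj.eq_or_lt
    · rw [← hj1, Nat.sub_self, Wsum_zero] at hgt
      exact hs.1.not_gt hgt
    · have : j ≤ j - 1 := Nat.sInf_le ⟨by omega, hgt⟩
      omega
  exact ⟨j, hj, hjn, hle, hlt⟩

variable (hw : ∀ j, 1 ≤ j → j ≤ n → 0 ≤ w j)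
include hw

lemma Wsum_mono {i j : ℕ} (hij : i ≤ j) (hjn : j ≤ n) : Wsum w i ≤ Wsum w j :=
  Finset.sum_le_sum_of_subset_of_nonneg (Finset.Icc_subset_Icc_right hij)
    fun x hx _ => hw x (Finset.mem_Icc.1 hx).1 ((Finset.mem_Icc.1 hx).2.trans hjn)

lemma Wsum_nonneg {j : ℕ} (hjn : j ≤ n) : 0 ≤ Wsum w j :=
  Wsum_zero w ▸ Wsum_mono hw j.zero_le hjn

lemma lt_of_Wsum_lt {i j : ℕ} (hin : i ≤ n) (h : Wsum w i < Wsum w j) : i < j := by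
  by_contra! hji
  exact (Wsum_mono hw hji hin).not_gt h

lemma rateFn_of_mem_Ico {j : ℕ} (hj : 1 ≤ j) (hjn : j ≤ n) {s : ℝ}
    (hs : s ∈ Ico (Wsum w (j - 1)) (Wsum w j)) : rateFn n w θ θH s = θ j := by
  have hmem : j ∈ {i : ℕ | 1 ≤ i ∧ s < Wsum w i} := ⟨hj, hs.2⟩
  rw [rateFn, if_pos (hs.2.trans_le (Wsum_mono hw hjn le_rfl))]
  refine congrArg θ (le_antisymm (Nat.sInf_le hmem) ?_)
  obtain ⟨-, hlt⟩ := Nat.sInf_mem ⟨j, hmem⟩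
  have := lt_of_Wsum_lt hw (by omega) (hs.1.trans_lt hlt)
  omega

lemma rateFn_monotoneOn {m : ℕ} (hmn : m ≤ n) (hθ : MonotoneOn θ (Icc 1 m)) :
    MonotoneOn (rateFn n w θ θH) (Ico 0 (Wsum w m)) := by
  have hWm := Wsum_mono hw hmn le_rfl
  intro s hs s' hs' hss'
  obtain ⟨j, hj, hjn, hsj⟩ := exists_mem_Ico_Wsum ⟨hs.1, hs.2.trans_le hWm⟩
  obtain ⟨j', hj', hjn', hsj'⟩ := exists_mem_Ico_Wsum ⟨hs'.1, hs'.2.trans_le hWm⟩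
  have hjj' := lt_of_Wsum_lt hw (by omega) (hsj.1.trans_lt (hss'.trans_lt hsj'.2))
  have hj'm := lt_of_Wsum_lt hw (by omega) (hsj'.1.trans_lt hs'.2)
  rw [rateFn_of_mem_Ico hw hj hjn hsj, rateFn_of_mem_Ico hw hj' hjn' hsj']
  exact hθ ⟨hj, by omega⟩ ⟨hj', by omega⟩ (by omega)

lemma le_rateFn_of_Wsum_le {m : ℕ} {u : ℝ} (hmn : m ≤ n) (hθ : ∀ j, m < j → j ≤ n → u ≤ θ j)
    (hθH : u ≤ θH) {s : ℝ} (hs : Wsum w m ≤ s) : u ≤ rateFn n w θ θH s := by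
  rcases lt_or_ge s (Wsum w n) with hsn | hsn
  · obtain ⟨j, hj, hjn, hsj⟩ := exists_mem_Ico_Wsum ⟨(Wsum_nonneg hw hmn).trans hs, hsn⟩
    rw [rateFn_of_mem_Ico hw hj hjn hsj]
    exact hθ j (lt_of_Wsum_lt hw hmn (hs.trans_lt hsj.2)) hjn
  · rw [rateFn_of_Wsum_le hsn]
    exact hθH

lemma rateFn_eqOn_window {j : ℕ} (hj : j < n) :
    EqOn (fun _ => θ (j + 1)) (rateFn n w θ θH) (uIoo (Wsum w j) (Wsum w (j + 1))) := by
  intro s hs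
  rw [uIoo_of_le (Wsum_mono hw j.le_succ hj)] at hs
  exact (rateFn_of_mem_Ico hw (by omega) hj ⟨hs.1.le, hs.2⟩).symm

lemma intervalIntegrable_rateFn_window {j : ℕ} (hj : j < n) :
    IntervalIntegrable (rateFn n w θ θH) volume (Wsum w j) (Wsum w (j + 1)) :=
  intervalIntegrable_const.congr_uIoo (rateFn_eqOn_window hw hj)

lemma integral_rateFn_window {j : ℕ} (hj : j < n) :
    ∫ s in (Wsum w j)..(Wsum w (j + 1)), rateFn n w θ θH s = θ (j + 1) * w (j + 1) := by
  rw [← intervalIntegral.integral_congr_uIoo (rateFn_eqOn_window hw hj),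
    intervalIntegral.integral_const, Wsum_succ, smul_eq_mul]
  ring

lemma integral_rateFn_zero_Wsum {p : ℕ} (hp : p ≤ n) :
    ∫ s in (0 : ℝ)..(Wsum w p), rateFn n w θ θH s = ∑ j ∈ Finset.Icc 1 p, θ j * w j := by
  rw [← Wsum_zero w, ← intervalIntegral.sum_integral_adjacent_intervals (a := Wsum w)
      fun k hk => intervalIntegrable_rateFn_window hw (hk.trans_le hp),
    Finset.sum_congr rfl fun k hk =>
      integral_rateFn_window hw ((Finset.mem_range.1 hk).trans_le hp),
    Finset.range_eq_Ico, Finset.sum_Ico_add' (fun j => θ j * w j), Finset.Ico_add_one_right_eq_Icc]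

lemma intervalIntegrable_rateFn {x : ℝ} (hx : 0 ≤ x) :
    IntervalIntegrable (rateFn n w θ θH) volume 0 x := by
  have hhead : IntervalIntegrable (rateFn n w θ θH) volume 0 (Wsum w n) :=
    Wsum_zero w ▸ IntervalIntegrable.trans_iterate fun _ hk =>
      intervalIntegrable_rateFn_window hw hk
  have htail : IntervalIntegrable (rateFn n w θ θH) volume (Wsum w n) (max x (Wsum w n)) := by
    refine intervalIntegrable_const.congr_uIoo fun s hs => (rateFn_of_Wsum_le ?_).symm
    rw [uIoo_of_le (le_max_right _ _)] at hs
    exact hs.1.le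
  exact (hhead.trans htail).mono_set <| uIcc_subset_uIcc left_mem_uIcc
    (mem_uIcc_of_le hx (le_max_left _ _))

end RateFn

theorem stmt3_general (n : ℕ) (w θ : ℕ → ℝ)
    (hw : ∀ j, 1 ≤ j → j ≤ n → 0 ≤ w j) (θH : ℝ)
    (T θL CL uH : ℝ) (hθL : 0 < θL) (hCL : 0 ≤ CL)
    (D : ℝ) (hDdef : D = T - CL / θL)
    (k : ℕ) (hk : ECW n w D k)
    (h12 : uH * Wsum w (k - 1) ≤ ∑ j ∈ Finset.Icc 1 (k - 1), θ j * w j)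
    (h13 : ∀ j, 1 ≤ j → j ≤ k - 1 → j + 1 ≤ n → θ j ≤ θ (j + 1))
    (h14 : ∀ j, k ≤ j → j ≤ n → uH ≤ θ j)
    (h15 : uH ≤ θH) :
    ∀ t₀, 0 ≤ t₀ → t₀ < Wsum w (k - 1) →
      uH * T ≤ ∫ s in t₀..(t₀ + T), rateFn n w θ θH s := by
  intro t₀ ht₀ ht₀W
  obtain ⟨hk1, hkn, hWD, -⟩ := hk
  have hDT : D ≤ T := by
    rw [hDdef]
    linarith [div_nonneg hCL hθL.le]
  have hθ : MonotoneOn θ (Icc 1 (k - 1)) :=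
    monotoneOn_of_le_succ ordConnected_Icc fun j _ hj hj1 => by
      rw [Order.succ_eq_add_one] at hj1 ⊢
      exact h13 j hj.1 hj.2 (hj1.2.trans (by omega))
  have key := mul_sub_le_integral_of_monotoneOn (e := t₀ + T) ht₀ ht₀W (by linarith)
    (intervalIntegrable_rateFn hw (by linarith)) (rateFn_monotoneOn hw (by omega) hθ)
    (fun s hs => le_rateFn_of_Wsum_le hw (by omega) (fun j hj hjn => h14 j (by omega) hjn) h15 hs.1)
    (by rwa [sub_zero, integral_rateFn_zero_Wsum hw (by omega)])
  rwa [add_sub_cancel_left] at key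

/-- **Theorem 2** (early transition jobs): under conditions (12)–(15), a job released
at `t₀ < W_{k−1}` after the mode switch receives at least `u^H·T` units of allocation
in `[t₀, t₀ + T]`. -/
theorem stmt3 (n : ℕ) (hn : 1 ≤ n) (w θ : ℕ → ℝ)
    (hw : ∀ j, 1 ≤ j → j ≤ n → 0 ≤ w j) (θH : ℝ)
    (T θL CL uH : ℝ) (hT : 0 < T) (hθL : 0 < θL) (hCL : 0 ≤ CL) (huH : 0 ≤ uH)
    (D : ℝ) (hDdef : D = T - CL / θL) (hD : 0 < D)
    (k : ℕ) (hk : ECW n w D k)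
    (h12 : uH * Wsum w (k - 1) ≤ ∑ j ∈ Finset.Icc 1 (k - 1), θ j * w j)
    (h13 : ∀ j, 1 ≤ j → j ≤ k - 1 → j + 1 ≤ n → θ j ≤ θ (j + 1))
    (h13' : k = n + 1 → θ n ≤ θH)
    (h14 : ∀ j, k ≤ j → j ≤ n → uH ≤ θ j)
    (h15 : uH ≤ θH) :
    ∀ t₀, 0 ≤ t₀ → t₀ < Wsum w (k - 1) →
      uH * T ≤ ∫ s in t₀..(t₀ + T), rateFn n w θ θH s :=
  stmt3_general n w θ hw θH T θL CL uH hθL hCL D hDdef k hk h12 h13 h14 h15
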